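/- arXiv:2205.15466 — 4 statements merged into one kernel-verified Lean document; each statement's English description precedes it below -/
import Mathlib

section
/- For any weight function w : {1,...,n} → ℝ with ∑_{k=1}^{n} C(n-1,k-1)·w(k) = n, and for the semivalue φ(i;U,w) := ∑_{k=1}^{n} (w(k)/n) ∑_{S ⊆ N\{i}, |S|=k-1} (U(S∪{i}) − U(S)), the scaled difference between two points i ≠ j satisfies n(φ(i;U,w) − φ(j;U,w)) = ∑_{k=1}^{n-1} (w(k)+w(k+1)) ∑_{S ⊆ N\{i,j}, |S|=k-1} (U(S∪{i}) − U(S∪{j})). -/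
open Finset

/-- The semivalue with weight function `w` of data point `i` w.r.t. utility `U`:
`φ(i;U,w) = ∑_{k=1}^{n} (w(k)/n) ∑_{S ⊆ N\{i}, |S|=k-1} (U(S∪{i}) − U(S))`. -/
noncomputable def semivalue (n : ℕ) (w : ℕ → ℝ) (U : Finset (Fin n) → ℝ) (i : Fin n) : ℝ :=
  ∑ k ∈ Finset.Icc 1 n, (w k / n) *
    ∑ S ∈ (Finset.univ.erase i).powerset.filter (fun S => S.card = k - 1),
      (U (insert i S) - U S)

/-!
Split the coalitions `S ∌ i` according to whether they contain `j`, and symmetrically for `j`.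
The terms `U (S ∪ {i, j})` cancel, and the marginal contributions of `i` and `j` at size `m + 1`
differ by `D (m + 1) + D m`, where `D m` sums `U (S ∪ {i}) - U (S ∪ {j})` over the `m`-subsets
of `N \ {i, j}`. Summation by parts then pairs each `D m` with the weights `w (m + 1) + w (m + 2)`.
-/

theorem Finset.sum_powersetCard_succ_insert {α M : Type*} [DecidableEq α] [AddCommMonoid M]
    {x : α} {B : Finset α} (hx : x ∉ B) (m : ℕ) (g : Finset α → M) :
    ∑ S ∈ (insert x B).powersetCard (m + 1), g S =
      ∑ S ∈ B.powersetCard (m + 1), g S + ∑ S ∈ B.powersetCard m, g (insert x S) := by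
  have hinj : Set.InjOn (insert x) (B.powersetCard m : Set (Finset α)) := by
    intro S hS T hT hST
    have hxS : x ∉ S := fun h => hx ((mem_powersetCard.mp hS).1 h)
    have hxT : x ∉ T := fun h => hx ((mem_powersetCard.mp hT).1 h)
    rw [← erase_insert hxS, ← erase_insert hxT, hST]
  have hdisj : Disjoint (B.powersetCard (m + 1)) ((B.powersetCard m).image (insert x)) := by
    refine disjoint_left.mpr fun S hS hS' => ?_
    obtain ⟨T, -, rfl⟩ := mem_image.mp hS'
    exact hx ((mem_powersetCard.mp hS).1 (mem_insert_self x T))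
  rw [powersetCard_succ_insert hx, sum_union hdisj, sum_image hinj]

theorem Finset.sum_range_succ_mul_eq_of_succ_eq_add {R : Type*} [CommSemiring R]
    (c f D : ℕ → R) (h0 : f 0 = D 0) (hsucc : ∀ m, f (m + 1) = D (m + 1) + D m) (N : ℕ) :
    ∑ m ∈ range (N + 1), c m * f m =
      ∑ m ∈ range N, (c m + c (m + 1)) * D m + c N * D N := by
  induction N with
  | zero => simp [h0]
  | succ N ih =>
    rw [sum_range_succ, ih, hsucc, sum_range_succ]
    ring

theorem Finset.sum_Icc_one_eq_sum_range {M : Type*} [AddCommMonoid M] (f : ℕ → M) (n : ℕ) :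
    ∑ k ∈ Icc 1 n, f k = ∑ m ∈ range n, f (m + 1) := by
  rw [range_eq_Ico, sum_Ico_add', ← Ico_add_one_right_eq_Icc, zero_add]

section MarginalSums

variable {α G : Type*} [DecidableEq α] [AddCommGroup G] (U : Finset α → G)

def marginalSum (x : α) (T : Finset α) (m : ℕ) : G :=
  ∑ S ∈ T.powersetCard m, (U (insert x S) - U S)

def swapSum (i j : α) (B : Finset α) (m : ℕ) : G :=
  ∑ S ∈ B.powersetCard m, (U (insert i S) - U (insert j S))

theorem marginalSum_zero_sub_marginalSum_zero (i j : α) (T T' B : Finset α) :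
    marginalSum U i T 0 - marginalSum U j T' 0 = swapSum U i j B 0 := by
  simp [marginalSum, swapSum]

theorem marginalSum_succ_sub_marginalSum_succ {i j : α} {B : Finset α} (hi : i ∉ B) (hj : j ∉ B)
    (m : ℕ) :
    marginalSum U i (insert j B) (m + 1) - marginalSum U j (insert i B) (m + 1) =
      swapSum U i j B (m + 1) + swapSum U i j B m := by
  simp only [marginalSum, swapSum, sum_powersetCard_succ_insert hi, sum_powersetCard_succ_insert hj,
    insert_comm j i, sum_sub_distrib]
  abel

theorem swapSum_eq_zero_of_card_lt (i j : α) {B : Finset α} {m : ℕ} (h : B.card < m) :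
    swapSum U i j B m = 0 := by
  rw [swapSum, powersetCard_eq_empty.mpr h, sum_empty]

end MarginalSums

theorem natCast_mul_semivalue {n : ℕ} (w : ℕ → ℝ) (U : Finset (Fin n) → ℝ) (i : Fin n) :
    (n : ℝ) * semivalue n w U i = ∑ m ∈ range n, w (m + 1) * marginalSum U i (univ.erase i) m := by
  have hn : (n : ℝ) ≠ 0 := Nat.cast_ne_zero.mpr (Fin.pos i).ne'
  rw [semivalue, mul_sum, sum_Icc_one_eq_sum_range]
  refine sum_congr rfl fun m _ => ?_
  rw [marginalSum, powersetCard_eq_filter, Nat.add_sub_cancel]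
  field_simp

theorem semivalue_scaled_difference_general (n : ℕ) (w : ℕ → ℝ)
    (U : Finset (Fin n) → ℝ) (i j : Fin n) (hij : i ≠ j) :
    (n : ℝ) * (semivalue n w U i - semivalue n w U j) =
      ∑ k ∈ Finset.Icc 1 (n - 1), (w k + w (k + 1)) *
        ∑ S ∈ ((Finset.univ.erase i).erase j).powerset.filter (fun S => S.card = k - 1),
          (U (insert i S) - U (insert j S)) := by
  set B := (univ.erase i).erase j with hB_def
  have hjB : j ∉ B := notMem_erase j _
  have hiB : i ∉ B := fun h => notMem_erase i univ (mem_of_mem_erase h)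
  have hj : j ∈ univ.erase i := mem_erase.mpr ⟨hij.symm, mem_univ j⟩
  have hBi : univ.erase i = insert j B := (insert_erase hj).symm
  have hBj : univ.erase j = insert i B := by
    rw [hB_def, erase_right_comm]
    exact (insert_erase (mem_erase.mpr ⟨hij, mem_univ i⟩)).symm
  obtain ⟨N, rfl⟩ : ∃ N, n = N + 1 := Nat.exists_eq_add_one.mpr (Fin.pos i)
  have hB : B.card < N := by
    simpa using card_lt_card (erase_ssubset hj)
  rw [mul_sub, natCast_mul_semivalue, natCast_mul_semivalue, ← sum_sub_distrib, hBi, hBj,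
    Nat.add_sub_cancel, sum_Icc_one_eq_sum_range]
  simp_rw [← mul_sub, Nat.add_sub_cancel, ← powersetCard_eq_filter]
  rw [sum_range_succ_mul_eq_of_succ_eq_add (fun m => w (m + 1)) _ (swapSum U i j B)
    (marginalSum_zero_sub_marginalSum_zero U i j _ _ B)
    (marginalSum_succ_sub_marginalSum_succ U hiB hjB), swapSum_eq_zero_of_card_lt U i j hB,
    mul_zero, add_zero]
  rfl

theorem semivalue_scaled_difference (n : ℕ) (hn : 2 ≤ n) (w : ℕ → ℝ)
    (hw : ∑ k ∈ Finset.Icc 1 n, (Nat.choose (n - 1) (k - 1) : ℝ) * w k = n)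
    (U : Finset (Fin n) → ℝ) (i j : Fin n) (hij : i ≠ j) :
    (n : ℝ) * (semivalue n w U i - semivalue n w U j) =
      ∑ k ∈ Finset.Icc 1 (n - 1), (w k + w (k + 1)) *
        ∑ S ∈ ((Finset.univ.erase i).erase j).powerset.filter (fun S => S.card = k - 1),
          (U (insert i S) - U (insert j S)) :=
  semivalue_scaled_difference_general n w U i j hij
end

section
/- Let U : 2^N → [0,1], and for samples S₁,...,Sₘ define S⁺ = {t : i ∈ Sₜ} and S⁻ = {t : i ∉ Sₜ}, with |S⁺|, |S⁻| > 0 and |S⁺| + |S⁻| = m. Let φ̂(i) = (1/|S⁺|)∑_{t∈S⁺}U(Sₜ) − (1/|S⁻|)∑_{t∈S⁻}U(Sₜ) and φ̃(i) = (2/m)∑_{t∈S⁺}U(Sₜ) − (2/m)∑_{t∈S⁻}U(Sₜ). Then |φ̂(i) − φ̃(i)| ≤ (4/m)·| |S⁺| − m/2 |. -/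
open Finset

/-!
Write `a = |S⁺|`, `b = |S⁻| = m - a` and `A`, `B` for the two sums. Since `U` takes values in
`[0, 1]`, the means `A / a` and `B / b` lie in `[0, 1]`, and
`A / a - (2 / m) A = (A / a) (2 / m) (m / 2 - a)`; likewise for `B`, with `|b - m / 2| = |a - m / 2|`.
An empty half is harmless: its sum is `0`, and so is its mean under `x / 0 = 0`.
-/

lemma abs_div_sub_two_div_mul_le {A a m : ℝ} (hA : 0 ≤ A) (hAa : A ≤ a) (ham : a ≤ m) :
    |A / a - 2 / m * A| ≤ 2 / m * |a - m / 2| := by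
  rcases (hA.trans hAa).eq_or_lt with rfl | ha
  · obtain rfl : A = 0 := le_antisymm hAa hA
    simp only [div_zero, mul_zero, sub_self, abs_zero]
    positivity
  have hm : 0 < m := ha.trans_le ham
  have hratio : |A / a| ≤ 1 := by
    rw [abs_of_nonneg (by positivity)]
    exact (div_le_one ha).2 hAa
  have hfactor : A / a - 2 / m * A = A / a * (2 / m * (m / 2 - a)) := by
    field_simp
  rw [hfactor, abs_mul, abs_mul, abs_of_pos (show 0 < 2 / m by positivity), abs_sub_comm]
  exact mul_le_of_le_one_left (by positivity) hratio

lemma abs_two_part_estimator_sub_le {A B a b m : ℝ} (hA : 0 ≤ A) (hAa : A ≤ a)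
    (hB : 0 ≤ B) (hBb : B ≤ b) (hab : a + b = m) :
    |(A / a - B / b) - (2 / m * A - 2 / m * B)| ≤ 4 / m * |a - m / 2| := by
  have hb_dev : |b - m / 2| = |a - m / 2| := by
    rw [← abs_neg, ← hab]
    ring_nf
  calc |(A / a - B / b) - (2 / m * A - 2 / m * B)|
      = |(A / a - 2 / m * A) - (B / b - 2 / m * B)| := by ring_nf
    _ ≤ |A / a - 2 / m * A| + |B / b - 2 / m * B| := abs_sub _ _
    _ ≤ 2 / m * |a - m / 2| + 2 / m * |b - m / 2| :=
        add_le_add (abs_div_sub_two_div_mul_le hA hAa (by linarith))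
          (abs_div_sub_two_div_mul_le hB hBb (by linarith))
    _ = 4 / m * |a - m / 2| := by rw [hb_dev]; ring

lemma sum_mem_Icc_card {ι : Type*} (s : Finset ι) (f : ι → ℝ) (hf : ∀ x, f x ∈ Set.Icc 0 1) :
    ∑ x ∈ s, f x ∈ Set.Icc 0 (#s : ℝ) := by
  constructor
  · exact sum_nonneg fun x _ => (hf x).1
  · simpa using sum_le_card_nsmul s f 1 fun x _ => (hf x).2

theorem msr_vs_idealized_general (n m : ℕ) (U : Finset (Fin n) → ℝ)
    (hU : ∀ S, U S ∈ Set.Icc (0 : ℝ) 1) (S : Fin m → Finset (Fin n)) (i : Fin n) :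
    |((∑ t ∈ Finset.filter (fun t => i ∈ S t) Finset.univ, U (S t)) /
          ((Finset.filter (fun t => i ∈ S t) Finset.univ).card : ℝ) -
        (∑ t ∈ Finset.filter (fun t => i ∉ S t) Finset.univ, U (S t)) /
          ((Finset.filter (fun t => i ∉ S t) Finset.univ).card : ℝ)) -
      ((2 / (m : ℝ)) * (∑ t ∈ Finset.filter (fun t => i ∈ S t) Finset.univ, U (S t)) -
        (2 / (m : ℝ)) * (∑ t ∈ Finset.filter (fun t => i ∉ S t) Finset.univ, U (S t)))| ≤
      (4 / (m : ℝ)) * |((Finset.filter (fun t => i ∈ S t) Finset.univ).card : ℝ) - (m : ℝ) / 2| := by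
  have hsum_plus := sum_mem_Icc_card {t | i ∈ S t} (fun t => U (S t)) fun t => hU (S t)
  have hsum_minus := sum_mem_Icc_card {t | i ∉ S t} (fun t => U (S t)) fun t => hU (S t)
  have hcard : (#{t | i ∈ S t} : ℝ) + #{t | i ∉ S t} = m := by
    rw [← Nat.cast_add, card_filter_add_card_filter_not, card_univ, Fintype.card_fin]
  exact abs_two_part_estimator_sub_le hsum_plus.1 hsum_plus.2 hsum_minus.1 hsum_minus.2 hcard

/-- Deterministic comparison between the MSR estimator (normalizing by the actual counts
`|S⁺|, |S⁻|`) and its idealized version (normalizing by `m/2`). -/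
theorem msr_vs_idealized (n m : ℕ) (U : Finset (Fin n) → ℝ)
    (hU : ∀ S, U S ∈ Set.Icc (0 : ℝ) 1) (S : Fin m → Finset (Fin n)) (i : Fin n)
    (hplus : (Finset.filter (fun t => i ∈ S t) Finset.univ).Nonempty)
    (hminus : (Finset.filter (fun t => i ∉ S t) Finset.univ).Nonempty) :
    |((∑ t ∈ Finset.filter (fun t => i ∈ S t) Finset.univ, U (S t)) /
          ((Finset.filter (fun t => i ∈ S t) Finset.univ).card : ℝ) -
        (∑ t ∈ Finset.filter (fun t => i ∉ S t) Finset.univ, U (S t)) /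
          ((Finset.filter (fun t => i ∉ S t) Finset.univ).card : ℝ)) -
      ((2 / (m : ℝ)) * (∑ t ∈ Finset.filter (fun t => i ∈ S t) Finset.univ, U (S t)) -
        (2 / (m : ℝ)) * (∑ t ∈ Finset.filter (fun t => i ∉ S t) Finset.univ, U (S t)))| ≤
      (4 / (m : ℝ)) * |((Finset.filter (fun t => i ∈ S t) Finset.univ).card : ℝ) - (m : ℝ) / 2| :=
  msr_vs_idealized_general n m U hU S i
end

section
/- Let S_n ∈ ℝ^{n×2^n} be the semivalue matrix of a semivalue with weight w, with entries (S_n)_{i,S} = w(|S|)/n if i ∈ S and (S_n)_{i,S} = −w(|S|+1)/n if i ∉ S. Then S_n·S_nᵀ = (d₁ − d₂)·I_n + d₂·J_n, where d₁ = (2/n²)∑_{k=1}^{n} C(n-1,k-1)w(k)², d₂ = (1/n²)∑_{k=0}^{n-2} C(n-2,k)(w(k+2) − w(k+1))², I_n is the identity and J_n the all-ones matrix. -/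
/-!
Split the subsets `S` of `N` according to whether they contain `i` (and `j`). On the diagonal,
`T` and `T ∪ {i}` contribute `w(|T|+1)²` each; off the diagonal, the four sets `U`, `U ∪ {i}`,
`U ∪ {j}`, `U ∪ {i, j}` contribute `w(k+1)² - 2 w(k+1) w(k+2) + w(k+2)² = (w(k+2) - w(k+1))²`
with `k = |U|`. Counting the `T` resp. `U` of each size gives the binomial sums.
-/

open Finset Matrix

variable {α : Type*} [DecidableEq α]

theorem Finset.sum_powerset_eq_sum_powerset_erase {β : Type*} [AddCommMonoid β] {s : Finset α}
    {a : α} (ha : a ∈ s) (F : Finset α → β) :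
    ∑ T ∈ s.powerset, F T = ∑ T ∈ (s.erase a).powerset, (F T + F (insert a T)) := by
  conv_lhs => rw [← insert_erase ha]
  rw [sum_powerset_insert (notMem_erase a s), sum_add_distrib]

/-- The `(i, S)` entry of `n • S_n`. -/
def semivalueRow (w : ℕ → ℝ) (i : α) (S : Finset α) : ℝ :=
  if i ∈ S then w S.card else -w (S.card + 1)

variable [Fintype α]

theorem sum_semivalueRow_sq (w : ℕ → ℝ) (i : α) :
    ∑ S, semivalueRow w i S ^ 2 =
      2 * ∑ k ∈ range (Fintype.card α), ((Fintype.card α - 1).choose k : ℝ) * w (k + 1) ^ 2 := by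
  have hcard : #(univ.erase i) + 1 = Fintype.card α := card_erase_add_one (mem_univ i)
  rw [← powerset_univ, sum_powerset_eq_sum_powerset_erase (mem_univ i)]
  have hpair : ∀ T ∈ (univ.erase i).powerset,
      semivalueRow w i T ^ 2 + semivalueRow w i (insert i T) ^ 2 = 2 * w (#T + 1) ^ 2 := by
    intro T hT
    have hiT : i ∉ T := fun h => notMem_erase i _ (mem_powerset.mp hT h)
    simp only [semivalueRow, if_neg hiT, mem_insert_self, if_true, card_insert_of_notMem hiT]
    ring
  rw [sum_congr rfl hpair, sum_powerset_apply_card (fun k => 2 * w (k + 1) ^ 2), hcard,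
    card_erase_of_mem (mem_univ i), card_univ, mul_sum]
  refine sum_congr rfl fun k _ => ?_
  rw [nsmul_eq_mul]
  ring

theorem sum_semivalueRow_mul_semivalueRow (w : ℕ → ℝ) {i j : α} (hij : i ≠ j) :
    ∑ S, semivalueRow w i S * semivalueRow w j S =
      ∑ k ∈ range (Fintype.card α - 1),
        ((Fintype.card α - 2).choose k : ℝ) * (w (k + 2) - w (k + 1)) ^ 2 := by
  have hj : j ∈ univ.erase i := mem_erase.mpr ⟨hij.symm, mem_univ j⟩
  have hcard : #((univ.erase i).erase j) + 1 = Fintype.card α - 1 := by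
    rw [card_erase_add_one hj, card_erase_of_mem (mem_univ i), card_univ]
  rw [← powerset_univ, sum_powerset_eq_sum_powerset_erase (mem_univ i),
    sum_powerset_eq_sum_powerset_erase hj]
  have hquad : ∀ U ∈ ((univ.erase i).erase j).powerset,
      semivalueRow w i U * semivalueRow w j U
        + semivalueRow w i (insert i U) * semivalueRow w j (insert i U)
        + (semivalueRow w i (insert j U) * semivalueRow w j (insert j U)
        + semivalueRow w i (insert i (insert j U)) * semivalueRow w j (insert i (insert j U)))
        = (w (#U + 2) - w (#U + 1)) ^ 2 := by
    intro U hU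
    have hiU : i ∉ U := fun h => by simpa using mem_powerset.mp hU h
    have hjU : j ∉ U := fun h => by simpa using mem_powerset.mp hU h
    simp only [semivalueRow, mem_insert, hiU, hjU, hij, hij.symm, or_false, or_true, or_self,
      if_true, if_false, not_false_eq_true, card_insert_of_notMem]
    ring
  rw [sum_congr rfl hquad,
    sum_powerset_apply_card (fun k => (w (k + 2) - w (k + 1)) ^ 2), hcard,
    card_erase_of_mem hj, card_erase_of_mem (mem_univ i), card_univ, Nat.sub_sub]
  simp only [nsmul_eq_mul]

theorem semivalue_matrix_gram_general (n : ℕ) (w : ℕ → ℝ) :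
    let M : Matrix (Fin n) (Finset (Fin n)) ℝ :=
      Matrix.of fun i S => if i ∈ S then w S.card / n else -(w (S.card + 1)) / n
    let d₁ : ℝ :=
      (2 / (n : ℝ) ^ 2) * ∑ k ∈ Finset.Icc 1 n, (Nat.choose (n - 1) (k - 1) : ℝ) * w k ^ 2
    let d₂ : ℝ :=
      (1 / (n : ℝ) ^ 2) *
        ∑ k ∈ Finset.range (n - 1), (Nat.choose (n - 2) k : ℝ) * (w (k + 2) - w (k + 1)) ^ 2
    M * Mᵀ = (d₁ - d₂) • (1 : Matrix (Fin n) (Fin n) ℝ) + d₂ • Matrix.of fun _ _ => (1 : ℝ) := by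
  intro M d₁ d₂
  have hM : ∀ i S, M i S = semivalueRow w i S / n := fun i S => by
    simp only [M, of_apply, semivalueRow]
    split_ifs <;> ring
  have hIcc : ∑ k ∈ Icc 1 n, ((n - 1).choose (k - 1) : ℝ) * w k ^ 2 =
      ∑ k ∈ range n, ((n - 1).choose k : ℝ) * w (k + 1) ^ 2 := by
    rw [← Ico_add_one_right_eq_Icc, sum_Ico_eq_sum_range]
    simp [add_comm]
  ext i j
  have hentry : (M * Mᵀ) i j = (∑ S, semivalueRow w i S * semivalueRow w j S) / (n : ℝ) ^ 2 := by
    simp only [mul_apply, transpose_apply, hM, sum_div]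
    exact sum_congr rfl fun S _ => by ring
  rw [hentry, Matrix.add_apply, Matrix.smul_apply, Matrix.smul_apply, of_apply, smul_eq_mul,
    smul_eq_mul]
  rcases eq_or_ne i j with rfl | hij
  · simp only [← sq, sum_semivalueRow_sq, Fintype.card_fin, one_apply_eq, d₁, d₂, hIcc]
    ring
  · simp only [sum_semivalueRow_mul_semivalueRow w hij, Fintype.card_fin, one_apply_ne hij, d₂]
    ring

/-- The semivalue matrix `S_n` with entries `w(|S|)/n` if `i ∈ S` and `−w(|S|+1)/n` if
`i ∉ S` satisfies `S_n·S_nᵀ = (d₁ − d₂)·I + d₂·J`. -/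
theorem semivalue_matrix_gram (n : ℕ) (hn : 2 ≤ n) (w : ℕ → ℝ) :
    let M : Matrix (Fin n) (Finset (Fin n)) ℝ :=
      Matrix.of fun i S => if i ∈ S then w S.card / n else -(w (S.card + 1)) / n
    let d₁ : ℝ :=
      (2 / (n : ℝ) ^ 2) * ∑ k ∈ Finset.Icc 1 n, (Nat.choose (n - 1) (k - 1) : ℝ) * w k ^ 2
    let d₂ : ℝ :=
      (1 / (n : ℝ) ^ 2) *
        ∑ k ∈ Finset.range (n - 1), (Nat.choose (n - 2) k : ℝ) * (w (k + 2) - w (k + 1)) ^ 2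
    M * Mᵀ = (d₁ - d₂) • (1 : Matrix (Fin n) (Fin n) ℝ) + d₂ • Matrix.of fun _ _ => (1 : ℝ) :=
  semivalue_matrix_gram_general n w
end

section
/- The Banzhaf value map U ↦ φ_banz(·;U), viewed as a linear map ℝ^{2^n} → ℝ^n, has operator norm (with respect to Euclidean norms) equal to 2^{-(n/2 - 1)}; i.e., ‖φ_banz(·;U) − φ_banz(·;Û)‖₂ ≤ 2^{-(n/2-1)}·‖U − Û‖₂ for all U, Û, and this Lipschitz constant is tight. Moreover, among all semivalues (weight functions w with ∑_{k=1}^n C(n-1,k-1)w(k) = n), the Banzhaf value achieves the smallest such Lipschitz constant. -/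
open Finset

/-- The Banzhaf value. -/
noncomputable def banzhaf (n : ℕ) (U : Finset (Fin n) → ℝ) (i : Fin n) : ℝ :=
  (1 / 2 ^ (n - 1)) * ∑ S ∈ (Finset.univ.erase i).powerset, (U (insert i S) - U S)

/-- Euclidean norm on `ι → ℝ`. -/
noncomputable def euclidNorm {ι : Type*} [Fintype ι] (v : ι → ℝ) : ℝ :=
  Real.sqrt (∑ t, v t ^ 2)

/-! Let `memSign i T = ±1` according as `i ∈ T`. The Banzhaf value is
`φᵢ(U) = 2^(1-n) ⟪memSign i, U⟫`, and the vectors `memSign i` are pairwise orthogonal of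
squared norm `2^n`, so Bessel's inequality gives the Lipschitz bound. Conversely every
normalised semivalue sends `memSign i₀` to `2 eᵢ₀`, of norm `2`, while `memSign i₀` has norm
`2^(n/2)`: this gives tightness and the lower bound for all semivalues at once. -/

open RealInnerProductSpace in
lemma sum_inner_sq_le_of_inner_eq_ite {E ι : Type*} [NormedAddCommGroup E]
    [InnerProductSpace ℝ E] [DecidableEq ι] (s : Finset ι) {v : ι → E} {c : ℝ} (hc : 0 < c)
    (hv : ∀ i j, ⟪v i, v j⟫ = if i = j then c else 0) (x : E) :
    ∑ i ∈ s, ⟪v i, x⟫ ^ 2 ≤ c * ‖x‖ ^ 2 := by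
  have hon : Orthonormal ℝ fun i => (√c)⁻¹ • v i := by
    rw [orthonormal_iff_ite]
    intro i j
    rw [real_inner_smul_left, real_inner_smul_right, hv]
    split_ifs
    · field_simp; exact (Real.sq_sqrt hc.le).symm
    · simp
  have hbessel := hon.sum_inner_products_le x (s := s)
  simp only [real_inner_smul_left, Real.norm_eq_abs, sq_abs, mul_pow, inv_pow,
    Real.sq_sqrt hc.le, ← mul_sum] at hbessel
  rwa [inv_mul_le_iff₀ hc] at hbessel

section EuclidNorm

variable {ι : Type*} [Fintype ι]

lemma euclidNorm_const_mul (c : ℝ) (v : ι → ℝ) :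
    euclidNorm (fun t => c * v t) = |c| * euclidNorm v := by
  simp only [euclidNorm, mul_pow, ← mul_sum, Real.sqrt_mul (sq_nonneg c), Real.sqrt_sq_eq_abs]

lemma euclidNorm_ite_eq [DecidableEq ι] (t₀ : ι) (a : ℝ) :
    euclidNorm (fun t => if t = t₀ then a else 0) = |a| := by
  simp [euclidNorm, ite_pow, Real.sqrt_sq_eq_abs]

end EuclidNorm

section MemSign

variable {α : Type*} [DecidableEq α]

def memSign (i : α) (T : Finset α) : ℝ := if i ∈ T then 1 else -1

lemma memSign_insert_self (i : α) (S : Finset α) : memSign i (insert i S) = 1 := by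
  simp [memSign]

lemma memSign_of_notMem {i : α} {S : Finset α} (hi : i ∉ S) : memSign i S = -1 := by
  simp [memSign, hi]

lemma memSign_insert_of_ne {i j : α} (S : Finset α) (hji : j ≠ i) :
    memSign j (insert i S) = memSign j S := by
  simp [memSign, hji]

lemma memSign_ne_zero (i : α) : memSign i ≠ 0 := fun h => by
  simpa [memSign] using congrFun h ∅

lemma memSign_mul_self (i : α) (S : Finset α) : memSign i S * memSign i S = 1 := by
  unfold memSign; split_ifs <;> norm_num

lemma memSign_insert_sub_memSign {i : α} {S : Finset α} (hi : i ∉ S) (j : α) :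
    memSign j (insert i S) - memSign j S = if i = j then 2 else 0 := by
  split_ifs with hij
  · subst hij; rw [memSign_insert_self, memSign_of_notMem hi]; norm_num
  · rw [memSign_insert_of_ne S (Ne.symm hij), sub_self]

variable [Fintype α]

lemma sum_finset_eq_sum_powerset_erase {M : Type*} [AddCommMonoid M] (i : α)
    (g : Finset α → M) :
    ∑ T, g T = ∑ S ∈ (univ.erase i).powerset, (g S + g (insert i S)) := by
  rw [← powerset_univ, ← insert_erase (mem_univ i), sum_powerset_insert (notMem_erase i _),
    sum_add_distrib, insert_erase (mem_univ i)]

lemma notMem_of_mem_powerset_erase {i : α} {S : Finset α} (hS : S ∈ (univ.erase i).powerset) :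
    i ∉ S :=
  fun h => notMem_erase i _ (mem_powerset.mp hS h)

lemma sum_memSign_mul_memSign (i j : α) :
    ∑ T, memSign i T * memSign j T = if i = j then 2 ^ Fintype.card α else 0 := by
  split_ifs with hij
  · simp [hij, memSign_mul_self]
  · rw [sum_finset_eq_sum_powerset_erase i]
    refine sum_eq_zero fun S hS => ?_
    rw [memSign_of_notMem (notMem_of_mem_powerset_erase hS), memSign_insert_self,
      memSign_insert_of_ne S (Ne.symm hij)]
    ring

lemma sum_insert_sub_eq_sum_memSign_mul (i : α) (W : Finset α → ℝ) :
    ∑ S ∈ (univ.erase i).powerset, (W (insert i S) - W S) = ∑ T, memSign i T * W T := by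
  rw [sum_finset_eq_sum_powerset_erase i]
  refine sum_congr rfl fun S hS => ?_
  rw [memSign_of_notMem (notMem_of_mem_powerset_erase hS), memSign_insert_self]
  ring

end MemSign

section Bessel

open RealInnerProductSpace

variable {α : Type*} [Fintype α] [DecidableEq α]

lemma euclidNorm_memSign (i : α) : euclidNorm (memSign i) = √(2 ^ Fintype.card α) := by
  simp [euclidNorm, sq, memSign_mul_self]

lemma euclidNorm_sum_memSign_mul_le (W : Finset α → ℝ) :
    euclidNorm (fun i => ∑ T, memSign i T * W T) ≤ √(2 ^ Fintype.card α) * euclidNorm W := by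
  have hinner : ∀ f g : Finset α → ℝ,
      ⟪WithLp.toLp 2 f, WithLp.toLp 2 g⟫ = ∑ T, f T * g T := fun f g => by
    simp [PiLp.inner_apply, mul_comm]
  have hbessel := sum_inner_sq_le_of_inner_eq_ite univ (v := fun i => WithLp.toLp 2 (memSign i))
    (by positivity) (fun i j => (hinner _ _).trans (sum_memSign_mul_memSign i j))
    (WithLp.toLp 2 W)
  simp only [hinner, EuclideanSpace.real_norm_sq_eq] at hbessel
  rw [euclidNorm, euclidNorm, ← Real.sqrt_mul (by positivity)]
  exact Real.sqrt_le_sqrt hbessel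

end Bessel

lemma two_rpow_mul_sqrt_two_pow (n : ℕ) :
    (2 : ℝ) ^ (-((n : ℝ) / 2 - 1)) * √(2 ^ n) = 2 := by
  rw [Real.sqrt_eq_rpow, ← Real.rpow_natCast, ← Real.rpow_mul zero_le_two,
    ← Real.rpow_add zero_lt_two, show -((n : ℝ) / 2 - 1) + n * (1 / 2) = 1 by ring,
    Real.rpow_one]

lemma two_pow_eq_two_mul_two_pow_pred {n : ℕ} (hn : 1 ≤ n) :
    (2 : ℝ) ^ n = 2 * 2 ^ (n - 1) := by
  rw [← pow_succ', Nat.sub_add_cancel hn]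

lemma one_div_two_pow_pred_mul_sqrt_two_pow {n : ℕ} (hn : 1 ≤ n) :
    1 / 2 ^ (n - 1) * √(2 ^ n) = (2 : ℝ) ^ (-((n : ℝ) / 2 - 1)) := by
  have hsqrt : 0 < √((2 : ℝ) ^ n) := by positivity
  rw [← mul_left_inj' hsqrt.ne', two_rpow_mul_sqrt_two_pow, mul_assoc,
    Real.mul_self_sqrt (by positivity), two_pow_eq_two_mul_two_pow_pred hn]
  field_simp

lemma banzhaf_sub_banzhaf (n : ℕ) (U V : Finset (Fin n) → ℝ) (i : Fin n) :
    banzhaf n U i - banzhaf n V i = 1 / 2 ^ (n - 1) * ∑ T, memSign i T * (U T - V T) := by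
  rw [banzhaf, banzhaf, ← mul_sub, ← sum_sub_distrib, ← sum_insert_sub_eq_sum_memSign_mul]
  congr 1
  exact sum_congr rfl fun _ _ => by ring

lemma euclidNorm_banzhaf_sub_le {n : ℕ} (hn : 1 ≤ n) (U V : Finset (Fin n) → ℝ) :
    euclidNorm (fun i => banzhaf n U i - banzhaf n V i) ≤
      (2 : ℝ) ^ (-((n : ℝ) / 2 - 1)) * euclidNorm (fun S => U S - V S) := by
  simp only [banzhaf_sub_banzhaf]
  rw [euclidNorm_const_mul, abs_of_pos (by positivity),
    ← one_div_two_pow_pred_mul_sqrt_two_pow hn, mul_assoc]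
  gcongr
  simpa using euclidNorm_sum_memSign_mul_le (fun S => U S - V S)

lemma banzhaf_memSign_sub_banzhaf_zero {n : ℕ} (i₀ i : Fin n) :
    banzhaf n (memSign i₀) i - banzhaf n 0 i = if i = i₀ then 2 else 0 := by
  rw [banzhaf_sub_banzhaf]
  simp only [Pi.zero_apply, sub_zero, sum_memSign_mul_memSign, Fintype.card_fin]
  split_ifs
  · rw [two_pow_eq_two_mul_two_pow_pred i.pos]
    field_simp
  · simp

lemma semivalue_memSign_sub_semivalue_zero {n : ℕ} {w : ℕ → ℝ}
    (hw : ∑ k ∈ Icc 1 n, ((n - 1).choose (k - 1) : ℝ) * w k = n) (i₀ i : Fin n) :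
    semivalue n w (memSign i₀) i - semivalue n w 0 i = if i = i₀ then 2 else 0 := by
  have hmarginal : ∀ k, ∑ S ∈ (univ.erase i).powerset.filter (fun S => S.card = k - 1),
      (memSign i₀ (insert i S) - memSign i₀ S) =
        (if i = i₀ then 2 else 0) * ((n - 1).choose (k - 1) : ℝ) := by
    intro k
    rw [sum_congr rfl fun S hS => memSign_insert_sub_memSign
      (notMem_of_mem_powerset_erase (mem_filter.mp hS).1) i₀,
      sum_const, ← powersetCard_eq_filter, card_powersetCard,
      card_erase_of_mem (mem_univ i), card_univ, Fintype.card_fin, nsmul_eq_mul, mul_comm]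
  have hn0 : (n : ℝ) ≠ 0 := Nat.cast_ne_zero.mpr i.pos.ne'
  simp only [semivalue, Pi.zero_apply, sub_self, mul_zero, sum_const_zero, sub_zero, hmarginal]
  calc ∑ k ∈ Icc 1 n, w k / n * ((if i = i₀ then 2 else 0) * ((n - 1).choose (k - 1) : ℝ))
      = (if i = i₀ then 2 else 0) / n *
          ∑ k ∈ Icc 1 n, ((n - 1).choose (k - 1) : ℝ) * w k := by
        rw [mul_sum]
        exact sum_congr rfl fun k _ => by ring
    _ = if i = i₀ then 2 else 0 := by rw [hw]; field_simp

section LipschitzConstant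

variable {n : ℕ} {f : (Finset (Fin n) → ℝ) → Fin n → ℝ} {i₀ : Fin n}

lemma euclidNorm_memSign_sub_zero_eq
    (hf : ∀ i, f (memSign i₀) i - f 0 i = if i = i₀ then 2 else 0) :
    euclidNorm (fun i => f (memSign i₀) i - f 0 i) = (2 : ℝ) ^ (-((n : ℝ) / 2 - 1)) *
      euclidNorm (fun S => memSign i₀ S - (0 : Finset (Fin n) → ℝ) S) := by
  simp only [hf, Pi.zero_apply, sub_zero, euclidNorm_ite_eq]
  rw [euclidNorm_memSign, Fintype.card_fin, two_rpow_mul_sqrt_two_pow]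
  norm_num

lemma two_rpow_le_of_lipschitz (hf : ∀ i, f (memSign i₀) i - f 0 i = if i = i₀ then 2 else 0)
    {L : ℝ} (hL : ∀ U V : Finset (Fin n) → ℝ,
      euclidNorm (fun i => f U i - f V i) ≤ L * euclidNorm (fun S => U S - V S)) :
    (2 : ℝ) ^ (-((n : ℝ) / 2 - 1)) ≤ L := by
  have h := hL (memSign i₀) 0
  rw [euclidNorm_memSign_sub_zero_eq hf] at h
  refine le_of_mul_le_mul_right h ?_
  simp only [Pi.zero_apply, sub_zero]
  rw [euclidNorm_memSign]
  positivity

end LipschitzConstant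

/-- The Banzhaf value map `U ↦ φ_banz(·;U)` is `2^{-(n/2-1)}`-Lipschitz with respect to
Euclidean norms, this constant is tight, and it is the smallest Lipschitz constant among
all semivalues. -/
theorem banzhaf_lipschitz_optimal (n : ℕ) (hn : 1 ≤ n) :
    (∀ U V : Finset (Fin n) → ℝ,
      euclidNorm (fun i => banzhaf n U i - banzhaf n V i) ≤
        (2 : ℝ) ^ (-((n : ℝ) / 2 - 1)) * euclidNorm (fun S => U S - V S)) ∧
    (∃ U V : Finset (Fin n) → ℝ, U ≠ V ∧
      euclidNorm (fun i => banzhaf n U i - banzhaf n V i) =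
        (2 : ℝ) ^ (-((n : ℝ) / 2 - 1)) * euclidNorm (fun S => U S - V S)) ∧
    (∀ w : ℕ → ℝ,
      (∑ k ∈ Finset.Icc 1 n, (Nat.choose (n - 1) (k - 1) : ℝ) * w k = n) →
      ∀ L : ℝ, 0 ≤ L →
      (∀ U V : Finset (Fin n) → ℝ,
        euclidNorm (fun i => semivalue n w U i - semivalue n w V i) ≤
          L * euclidNorm (fun S => U S - V S)) →
      (2 : ℝ) ^ (-((n : ℝ) / 2 - 1)) ≤ L) := by
  let i₀ : Fin n := ⟨0, hn⟩
  refine ⟨euclidNorm_banzhaf_sub_le hn, ?_, ?_⟩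
  · exact ⟨memSign i₀, 0, memSign_ne_zero i₀,
      euclidNorm_memSign_sub_zero_eq (banzhaf_memSign_sub_banzhaf_zero i₀)⟩
  · intro w hw L _ hL
    exact two_rpow_le_of_lipschitz (semivalue_memSign_sub_semivalue_zero hw i₀) hL
end
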